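/- Let χ: ℝⁿ → ℝ be a kernel satisfying conditions (K1)–(K3) with respect to the node sequence Πⁿ. If f: ℝⁿ → ℝ is bounded and measurable (hence locally integrable) and f is continuous at a point x ∈ ℝⁿ, then lim_{w→+∞} (S_w^χ f)(x) = f(x). -/

import Mathlib

open MeasureTheory Filter

noncomputable section

/-- The multivariate nodes `t_k = (t_{k_1}, …, t_{k_n})` built from a one-dimensional
node sequence `t : ℤ → ℝ`. -/
def nodes {n : ℕ} (t : ℤ → ℝ) (k : Fin n → ℤ) : EuclideanSpace ℝ (Fin n) :=
  WithLp.toLp 2 (fun i => t (k i))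

/-- The plurirectangle `R_k^w = ∏_i [t_{k_i}/w, t_{k_i+1}/w]`. -/
def cell {n : ℕ} (t : ℤ → ℝ) (w : ℝ) (k : Fin n → ℤ) : Set (EuclideanSpace ℝ (Fin n)) :=
  WithLp.ofLp ⁻¹' (Set.univ.pi fun i => Set.Icc (t (k i) / w) (t (k i + 1) / w))

/-- The multivariate sampling Kantorovich operator
`(S_w^χ f)(x) = ∑_k χ(wx − t_k) · (wⁿ/A_k) ∫_{R_k^w} f`. -/
def SK {n : ℕ} (t : ℤ → ℝ) (χ : EuclideanSpace ℝ (Fin n) → ℝ) (w : ℝ)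
    (f : EuclideanSpace ℝ (Fin n) → ℝ) (x : EuclideanSpace ℝ (Fin n)) : ℝ :=
  ∑' k : Fin n → ℤ,
    χ (w • x - nodes t k) *
      ((w ^ n / ∏ i, (t (k i + 1) - t (k i))) * ∫ u in cell t w k, f u)

/-- The node sequence `Π = (t_k)` is strictly increasing, diverges at `±∞`, and has gaps
between `δ` and `Δ`. -/
structure IsNodeSeq (t : ℤ → ℝ) (δ Δ : ℝ) : Prop where
  strictMono : StrictMono t
  tendsto_atTop : Tendsto t atTop atTop
  tendsto_atBot : Tendsto t atBot atBot
  delta_pos : 0 < δ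
  Delta_pos : 0 < Δ
  gap_lower : ∀ k : ℤ, δ ≤ t (k + 1) - t k
  gap_upper : ∀ k : ℤ, t (k + 1) - t k ≤ Δ

/-- The kernel conditions (K1)–(K3) for `χ : ℝⁿ → ℝ` with respect to the nodes `Πⁿ`. -/
structure IsKernel {n : ℕ} (t : ℤ → ℝ) (χ : EuclideanSpace ℝ (Fin n) → ℝ) : Prop where
  /-- (K1): `χ ∈ L¹(ℝⁿ)`. -/
  integrable : Integrable χ
  /-- (K1): `χ` is bounded in a neighbourhood of the origin. -/
  bounded_near_zero : ∃ ε > (0 : ℝ), ∃ M : ℝ,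
    ∀ x : EuclideanSpace ℝ (Fin n), ‖x‖ < ε → |χ x| ≤ M
  /-- (K2): `∑_k χ(u − t_k) = 1` for every `u`. -/
  partition_of_unity : ∀ u : EuclideanSpace ℝ (Fin n),
    ∑' k : Fin n → ℤ, χ (u - nodes t k) = 1
  /-- (K3): the absolute discrete moment of some order `β > 0` is finite. -/
  moment : ∃ β > (0 : ℝ),
    (∀ u : EuclideanSpace ℝ (Fin n),
        Summable fun k : Fin n → ℤ => |χ (u - nodes t k)| * ‖u - nodes t k‖ ^ β) ∧
      ∃ M : ℝ, ∀ u : EuclideanSpace ℝ (Fin n),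
        (∑' k : Fin n → ℤ, |χ (u - nodes t k)| * ‖u - nodes t k‖ ^ β) ≤ M

-- coordinate bound
lemma coord_abs_le_norm {n : ℕ} (v : EuclideanSpace ℝ (Fin n)) (i : Fin n) : |v i| ≤ ‖v‖ := by
  rw [EuclideanSpace.norm_eq]
  refine le_trans ?_ (Real.sqrt_le_sqrt (Finset.single_le_sum (f := fun j => ‖v j‖^2)
    (fun j _ => sq_nonneg _) (Finset.mem_univ i)))
  rw [Real.sqrt_sq_eq_abs]
  simp [abs_abs, Real.norm_eq_abs]

lemma node_sep_le {t : ℤ → ℝ} {δ Δ : ℝ} (ht : IsNodeSeq t δ Δ) {a b : ℤ} (hab : a ≤ b) :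
    δ * ((b : ℝ) - a) ≤ t b - t a := by
  have key : ∀ (m : ℕ) (a : ℤ), δ * m ≤ t (a + m) - t a := by
    intro m
    induction m with
    | zero => intro a; simp
    | succ m ih =>
      intro a
      have h1 := ht.gap_lower (a + m)
      have h2 := ih a
      have e : a + ((m : ℤ) + 1) = (a + m) + 1 := by ring
      rw [show ((m + 1 : ℕ) : ℤ) = (m : ℤ) + 1 from by push_cast; ring, e]
      push_cast
      linarith
  have h := key (b - a).toNat a
  have h1 : a + ((b - a).toNat : ℤ) = b := by omega
  rw [h1] at h
  have h2 : (((b - a).toNat : ℕ) : ℝ) = (b : ℝ) - a := by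
    rw [← Int.cast_natCast, Int.toNat_of_nonneg (by omega)]
    push_cast; ring
  rw [h2] at h
  exact h

lemma node_sep {t : ℤ → ℝ} {δ Δ : ℝ} (ht : IsNodeSeq t δ Δ) (a b : ℤ) :
    δ * |(a : ℝ) - (b : ℝ)| ≤ |t a - t b| := by
  rcases le_total a b with h | h
  · have h2 := node_sep_le ht h
    have hab : (a : ℝ) ≤ b := by exact_mod_cast h
    have htab : t a ≤ t b := ht.strictMono.monotone h
    have e1 : |(a:ℝ) - b| = (b:ℝ) - a := by rw [abs_sub_comm, abs_of_nonneg (by linarith)]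
    have e2 : |t a - t b| = t b - t a := by rw [abs_sub_comm, abs_of_nonneg (by linarith)]
    rw [e1, e2]; exact h2
  · have h2 := node_sep_le ht h
    have hab : (b : ℝ) ≤ a := by exact_mod_cast h
    have htab : t b ≤ t a := ht.strictMono.monotone h
    have e1 : |(a:ℝ) - b| = (a:ℝ) - b := abs_of_nonneg (by linarith)
    have e2 : |t a - t b| = t a - t b := abs_of_nonneg (by linarith)
    rw [e1, e2]; exact h2

lemma chi_abs_summable_bound {n : ℕ} {t : ℤ → ℝ} {δ Δ : ℝ} (ht : IsNodeSeq t δ Δ)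
    {χ : EuclideanSpace ℝ (Fin n) → ℝ}
    {ε₁ M₁ : ℝ} (hε₁ : 0 < ε₁) (hM₁0 : 0 ≤ M₁)
    (hχb : ∀ v : EuclideanSpace ℝ (Fin n), ‖v‖ < ε₁ → |χ v| ≤ M₁)
    {β Mβ : ℝ} (hβ : 0 < β)
    (hsum : ∀ u : EuclideanSpace ℝ (Fin n),
      Summable fun k : Fin n → ℤ => |χ (u - nodes t k)| * ‖u - nodes t k‖ ^ β)
    (hMβ : ∀ u : EuclideanSpace ℝ (Fin n),
      (∑' k : Fin n → ℤ, |χ (u - nodes t k)| * ‖u - nodes t k‖ ^ β) ≤ Mβ)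
    (u : EuclideanSpace ℝ (Fin n)) :
    Summable (fun k : Fin n → ℤ => |χ (u - nodes t k)|) ∧
    (∑' k : Fin n → ℤ, |χ (u - nodes t k)|) ≤
      (((2 * ⌈2 * ε₁ / δ⌉₊ + 1) ^ n : ℕ) : ℝ) * M₁ + Mβ / ε₁ ^ β := by
  classical
  set c : ℕ := ⌈2 * ε₁ / δ⌉₊ with hc
  set N : Set (Fin n → ℤ) := {k | ‖u - nodes t k‖ < ε₁} with hN
  have hεβpos : (0:ℝ) < ε₁ ^ β := Real.rpow_pos_of_pos hε₁ β
  have hbnd : ∀ k, |χ (u - nodes t k)| ≤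
      N.indicator (fun _ => M₁) k + |χ (u - nodes t k)| * ‖u - nodes t k‖ ^ β / ε₁ ^ β := by
    intro k
    by_cases hk : k ∈ N
    · rw [Set.indicator_of_mem hk]
      have h1 := hχb _ hk
      have h2 : 0 ≤ |χ (u - nodes t k)| * ‖u - nodes t k‖ ^ β / ε₁ ^ β :=
        div_nonneg (mul_nonneg (abs_nonneg _) (Real.rpow_nonneg (norm_nonneg _) _)) hεβpos.le
      linarith
    · rw [Set.indicator_of_notMem hk]
      have hk' : ε₁ ≤ ‖u - nodes t k‖ := le_of_not_gt hk
      have h1 : (1:ℝ) ≤ ‖u - nodes t k‖ ^ β / ε₁ ^ β :=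
        (one_le_div hεβpos).mpr (Real.rpow_le_rpow hε₁.le hk' hβ.le)
      have := mul_le_mul_of_nonneg_left h1 (abs_nonneg (χ (u - nodes t k)))
      rw [mul_one] at this
      rw [mul_div_assoc]
      linarith
  obtain ⟨F, hFsub, hFcard⟩ : ∃ F : Finset (Fin n → ℤ),
      N ⊆ ↑F ∧ F.card ≤ (2 * c + 1) ^ n := by
    by_cases hNe : N.Nonempty
    · obtain ⟨k₀, hk₀⟩ := hNe
      refine ⟨Fintype.piFinset fun i => Finset.Icc (k₀ i - c) (k₀ i + c), ?_, ?_⟩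
      · intro k hk
        rw [Finset.mem_coe, Fintype.mem_piFinset]
        intro i
        rw [Finset.mem_Icc]
        have hki : |u i - t (k i)| < ε₁ := by
          have h := coord_abs_le_norm (u - nodes t k) i
          have he : (u - nodes t k) i = u i - t (k i) := by simp [nodes]
          rw [he] at h
          exact lt_of_le_of_lt h hk
        have hk0i : |u i - t (k₀ i)| < ε₁ := by
          have h := coord_abs_le_norm (u - nodes t k₀) i
          have he : (u - nodes t k₀) i = u i - t (k₀ i) := by simp [nodes]
          rw [he] at h
          exact lt_of_le_of_lt h hk₀
        have hsep := node_sep ht (k i) (k₀ i)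
        have htri : |t (k i) - t (k₀ i)| ≤ |u i - t (k i)| + |u i - t (k₀ i)| := by
          have := abs_sub_abs_le_abs_sub (t (k i)) (t (k₀ i))
          calc |t (k i) - t (k₀ i)| = |(u i - t (k₀ i)) - (u i - t (k i))| := by ring_nf
            _ ≤ |u i - t (k₀ i)| + |u i - t (k i)| := abs_sub _ _
            _ = _ := by ring
        have hδc : 2 * ε₁ / δ ≤ (c : ℝ) := Nat.le_ceil _
        have h2 : δ * |((k i : ℝ)) - ((k₀ i : ℝ))| < 2 * ε₁ := by
          calc δ * |((k i : ℝ)) - ((k₀ i : ℝ))| ≤ |t (k i) - t (k₀ i)| := hsep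
            _ ≤ |u i - t (k i)| + |u i - t (k₀ i)| := htri
            _ < 2 * ε₁ := by linarith
        have h3 : |((k i : ℝ)) - ((k₀ i : ℝ))| ≤ (c : ℝ) := by
          have hδ := ht.delta_pos
          have : |((k i : ℝ)) - ((k₀ i : ℝ))| < 2 * ε₁ / δ := by
            rw [lt_div_iff₀ hδ]; linarith [h2]
          linarith
        have h4 : |k i - k₀ i| ≤ (c : ℤ) := by
          have : |((k i - k₀ i : ℤ) : ℝ)| ≤ ((c : ℤ) : ℝ) := by push_cast; push_cast at h3; exact h3
          exact_mod_cast (by rwa [← Int.cast_abs] at this : ((|k i - k₀ i| : ℤ) : ℝ) ≤ ((c:ℤ) : ℝ))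
        rcases abs_le.mp h4 with ⟨h5, h6⟩
        omega
      · rw [Fintype.card_piFinset]
        apply le_of_eq
        have : ∀ i, (Finset.Icc (k₀ i - (c:ℤ)) (k₀ i + c)).card = 2 * c + 1 := by
          intro i; rw [Int.card_Icc]; omega
        simp [this]
    · rw [Set.not_nonempty_iff_eq_empty] at hNe
      exact ⟨∅, by simp [hNe], by positivity⟩
  have hind0 : ∀ k ∉ F, N.indicator (fun _ => M₁) k = 0 := fun k hk =>
    Set.indicator_of_notMem (fun h => hk (hFsub h)) _
  have hindsum : Summable (N.indicator (fun _ => M₁) : (Fin n → ℤ) → ℝ) :=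
    summable_of_ne_finset_zero hind0
  have hmomsum : Summable (fun k : Fin n → ℤ =>
      |χ (u - nodes t k)| * ‖u - nodes t k‖ ^ β / ε₁ ^ β) := (hsum u).div_const _
  have hbsummable := hindsum.add hmomsum
  have hs : Summable (fun k : Fin n → ℤ => |χ (u - nodes t k)|) :=
    Summable.of_nonneg_of_le (fun k => abs_nonneg _) hbnd hbsummable
  refine ⟨hs, ?_⟩
  have hindtsum : ∑' k : Fin n → ℤ, N.indicator (fun _ => M₁) k ≤
      (((2 * c + 1) ^ n : ℕ) : ℝ) * M₁ := by
    rw [tsum_eq_sum hind0]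
    calc ∑ k ∈ F, N.indicator (fun _ => M₁) k ≤ ∑ _k ∈ F, M₁ := by
          refine Finset.sum_le_sum fun k _ => ?_
          by_cases h : k ∈ N
          · rw [Set.indicator_of_mem h]
          · rw [Set.indicator_of_notMem h]; exact hM₁0
      _ = (F.card : ℝ) * M₁ := by rw [Finset.sum_const, nsmul_eq_mul]
      _ ≤ _ := mul_le_mul_of_nonneg_right (by exact_mod_cast hFcard) hM₁0
  calc ∑' k : Fin n → ℤ, |χ (u - nodes t k)|
      ≤ ∑' k : Fin n → ℤ, (N.indicator (fun _ => M₁) k +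
          |χ (u - nodes t k)| * ‖u - nodes t k‖ ^ β / ε₁ ^ β) :=
        Summable.tsum_le_tsum hbnd hs hbsummable
    _ = (∑' k : Fin n → ℤ, N.indicator (fun _ => M₁) k) +
        ∑' k : Fin n → ℤ, |χ (u - nodes t k)| * ‖u - nodes t k‖ ^ β / ε₁ ^ β :=
        Summable.tsum_add hindsum hmomsum
    _ ≤ (((2 * c + 1) ^ n : ℕ) : ℝ) * M₁ + Mβ / ε₁ ^ β := by
        refine add_le_add hindtsum ?_
        rw [tsum_div_const]
        exact (div_le_div_iff_of_pos_right hεβpos).mpr (hMβ u)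

lemma cell_measurable {n : ℕ} (t : ℤ → ℝ) (w : ℝ) (k : Fin n → ℤ) :
    MeasurableSet (cell t w k) :=
  (MeasurableSet.univ_pi fun _ => measurableSet_Icc).preimage (WithLp.measurable_ofLp 2 _)

lemma volume_cell {n : ℕ} {t : ℤ → ℝ} {δ Δ : ℝ} (ht : IsNodeSeq t δ Δ) {w : ℝ} (hw : 0 < w)
    (k : Fin n → ℤ) :
    volume (cell t w k) = ENNReal.ofReal ((∏ i, (t (k i + 1) - t (k i))) / w ^ n) := by
  have hgap : ∀ i : Fin n, 0 ≤ t (k i + 1) - t (k i) := fun i =>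
    le_trans ht.delta_pos.le (ht.gap_lower _)
  have hpi : volume (cell t w k) =
      ∏ i, volume (Set.Icc (t (k i) / w) (t (k i + 1) / w)) := by
    have := (EuclideanSpace.volume_preserving_symm_measurableEquiv_toLp (Fin n)).measure_preimage
      (s := Set.univ.pi fun i => Set.Icc (t (k i) / w) (t (k i + 1) / w))
      (MeasurableSet.univ_pi fun _ => measurableSet_Icc).nullMeasurableSet
    rw [← volume_pi_pi]
    convert this using 2
    rfl
  rw [hpi]
  have : ∀ i : Fin n, volume (Set.Icc (t (k i) / w) (t (k i + 1) / w)) =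
      ENNReal.ofReal ((t (k i + 1) - t (k i)) / w) := by
    intro i
    rw [Real.volume_Icc, div_sub_div_same]
  simp only [this]
  rw [← ENNReal.ofReal_prod_of_nonneg (fun i _ => div_nonneg (hgap i) hw.le)]
  congr 1
  rw [Finset.prod_div_distrib, Finset.prod_const, Finset.card_univ, Fintype.card_fin]

lemma A_pos {n : ℕ} {t : ℤ → ℝ} {δ Δ : ℝ} (ht : IsNodeSeq t δ Δ) (k : Fin n → ℤ) :
    0 < ∏ i, (t (k i + 1) - t (k i)) :=
  Finset.prod_pos fun i _ => lt_of_lt_of_le ht.delta_pos (ht.gap_lower _)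

lemma volume_cell_toReal {n : ℕ} {t : ℤ → ℝ} {δ Δ : ℝ} (ht : IsNodeSeq t δ Δ) {w : ℝ}
    (hw : 0 < w) (k : Fin n → ℤ) :
    (volume (cell t w k)).toReal = (∏ i, (t (k i + 1) - t (k i))) / w ^ n := by
  rw [volume_cell ht hw k, ENNReal.toReal_ofReal
    (div_nonneg (A_pos ht k).le (pow_nonneg hw.le n))]

lemma volume_cell_lt_top {n : ℕ} {t : ℤ → ℝ} {δ Δ : ℝ} (ht : IsNodeSeq t δ Δ) {w : ℝ}
    (hw : 0 < w) (k : Fin n → ℤ) : volume (cell t w k) < ⊤ := by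
  rw [volume_cell ht hw k]; exact ENNReal.ofReal_lt_top

lemma integrableOn_cell {n : ℕ} {t : ℤ → ℝ} {δ Δ : ℝ} (ht : IsNodeSeq t δ Δ) {w : ℝ}
    (hw : 0 < w) (k : Fin n → ℤ) {f : EuclideanSpace ℝ (Fin n) → ℝ} (hf_meas : Measurable f)
    {M' : ℝ} (hM' : ∀ x, |f x| ≤ M') : IntegrableOn f (cell t w k) := by
  refine Integrable.mono' (g := fun _ => M') (integrableOn_const
    (volume_cell_lt_top ht hw k).ne)
    hf_meas.aestronglyMeasurable.restrict (ae_of_all _ fun u => ?_)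
  rw [Real.norm_eq_abs]; exact hM' u

lemma avg_abs_le {n : ℕ} {t : ℤ → ℝ} {δ Δ : ℝ} (ht : IsNodeSeq t δ Δ) {w : ℝ} (hw : 0 < w)
    (k : Fin n → ℤ) {f : EuclideanSpace ℝ (Fin n) → ℝ}
    {M' : ℝ} (hM' : ∀ x, |f x| ≤ M') :
    |(w ^ n / ∏ i, (t (k i + 1) - t (k i))) * ∫ u in cell t w k, f u| ≤ M' := by
  have hA := A_pos ht k
  have hwn : (0:ℝ) < w ^ n := pow_pos hw n
  have hM'0 : 0 ≤ M' := le_trans (abs_nonneg _) (hM' 0)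
  have hint : ‖∫ u in cell t w k, f u‖ ≤ M' * (volume (cell t w k)).toReal :=
    norm_setIntegral_le_of_norm_le_const_ae' (volume_cell_lt_top ht hw k)
      (ae_of_all _ fun u _ => by rw [Real.norm_eq_abs]; exact hM' u)
  rw [volume_cell_toReal ht hw k] at hint
  rw [Real.norm_eq_abs] at hint
  rw [abs_mul, abs_of_pos (div_pos hwn hA)]
  calc w ^ n / (∏ i, (t (k i + 1) - t (k i))) * |∫ u in cell t w k, f u|
      ≤ w ^ n / (∏ i, (t (k i + 1) - t (k i))) *
        (M' * ((∏ i, (t (k i + 1) - t (k i))) / w ^ n)) :=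
        mul_le_mul_of_nonneg_left hint (div_pos hwn hA).le
    _ = M' := by field_simp

lemma avg_sub_le {n : ℕ} {t : ℤ → ℝ} {δ Δ : ℝ} (ht : IsNodeSeq t δ Δ) {w : ℝ} (hw : 0 < w)
    (k : Fin n → ℤ) {f : EuclideanSpace ℝ (Fin n) → ℝ} (hf_meas : Measurable f)
    {M' : ℝ} (hM' : ∀ x, |f x| ≤ M') {x : EuclideanSpace ℝ (Fin n)} {ε' : ℝ} (hε' : 0 ≤ ε')
    (hclose : ∀ u ∈ cell t w k, |f u - f x| ≤ ε') :
    |(w ^ n / ∏ i, (t (k i + 1) - t (k i))) * (∫ u in cell t w k, f u) - f x| ≤ ε' := by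
  have hA := A_pos ht k
  have hwn : (0:ℝ) < w ^ n := pow_pos hw n
  have hf_int : IntegrableOn f (cell t w k) := integrableOn_cell ht hw k hf_meas hM'
  have hc_int : IntegrableOn (fun _ => f x) (cell t w k) :=
    integrableOn_const (volume_cell_lt_top ht hw k).ne
  have e1 : (w ^ n / ∏ i, (t (k i + 1) - t (k i))) * (∫ u in cell t w k, f u) - f x =
      (w ^ n / ∏ i, (t (k i + 1) - t (k i))) * ∫ u in cell t w k, (f u - f x) := by
    rw [integral_sub hf_int hc_int, setIntegral_const, Measure.real, volume_cell_toReal ht hw k,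
      smul_eq_mul]
    field_simp
  rw [e1]
  have hint : ‖∫ u in cell t w k, (f u - f x)‖ ≤ ε' * (volume (cell t w k)).toReal :=
    norm_setIntegral_le_of_norm_le_const_ae' (volume_cell_lt_top ht hw k)
      (ae_of_all _ fun u hu => by
        rw [Real.norm_eq_abs]; exact hclose u hu)
  rw [volume_cell_toReal ht hw k, Real.norm_eq_abs] at hint
  rw [abs_mul, abs_of_pos (div_pos hwn hA)]
  calc w ^ n / (∏ i, (t (k i + 1) - t (k i))) * |∫ u in cell t w k, (f u - f x)|
      ≤ w ^ n / (∏ i, (t (k i + 1) - t (k i))) *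
        (ε' * ((∏ i, (t (k i + 1) - t (k i))) / w ^ n)) :=
        mul_le_mul_of_nonneg_left hint (div_pos hwn hA).le
    _ = ε' := by field_simp

lemma cell_close {n : ℕ} {t : ℤ → ℝ} {δ Δ : ℝ} (ht : IsNodeSeq t δ Δ) {w : ℝ} (hw : 0 < w)
    (k : Fin n → ℤ) {x : EuclideanSpace ℝ (Fin n)} {γ : ℝ} (hγ : 0 < γ)
    (hWn : Real.sqrt n * Δ / w ≤ γ / 4)
    (hk : ‖w • x - nodes t k‖ ≤ w * (γ / 2)) :
    ∀ u ∈ cell t w k, ‖u - x‖ < γ := by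
  intro u hu
  set v : EuclideanSpace ℝ (Fin n) := w⁻¹ • nodes t k with hv
  have h1 : ‖v - x‖ ≤ γ / 2 := by
    have e : v - x = w⁻¹ • (nodes t k - w • x) := by
      rw [hv, smul_sub, smul_smul, inv_mul_cancel₀ hw.ne', one_smul]
    rw [e, norm_smul, norm_sub_rev, Real.norm_eq_abs, abs_of_pos (inv_pos.mpr hw)]
    calc w⁻¹ * ‖w • x - nodes t k‖ ≤ w⁻¹ * (w * (γ / 2)) :=
          mul_le_mul_of_nonneg_left hk (inv_pos.mpr hw).le
      _ = γ / 2 := by field_simp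
  have h2 : ‖u - v‖ ≤ Real.sqrt n * (Δ / w) := by
    have hΔw : (0:ℝ) ≤ Δ / w := div_nonneg ht.Delta_pos.le hw.le
    rw [EuclideanSpace.norm_eq]
    have hcoord : ∀ i : Fin n, ‖(u - v) i‖ ^ 2 ≤ (Δ / w) ^ 2 := by
      intro i
      have he : (u - v) i = u i - w⁻¹ * t (k i) := by simp [hv, nodes]
      have hui := hu i (Set.mem_univ i)
      obtain ⟨hl, hr⟩ := hui
      have hgap : t (k i + 1) / w - t (k i) / w ≤ Δ / w := by
        rw [div_sub_div_same]
        exact (div_le_div_iff_of_pos_right hw).mpr (ht.gap_upper _)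
      have habs : |u i - w⁻¹ * t (k i)| ≤ Δ / w := by
        rw [abs_le]
        constructor
        · have : (0:ℝ) ≤ u i - t (k i) / w := by linarith
          rw [inv_mul_eq_div]; linarith
        · rw [inv_mul_eq_div]; linarith
      rw [he, Real.norm_eq_abs]
      exact pow_le_pow_left₀ (abs_nonneg _) habs 2
    calc Real.sqrt (∑ i, ‖(u - v) i‖ ^ 2) ≤ Real.sqrt (∑ _i : Fin n, (Δ / w) ^ 2) :=
          Real.sqrt_le_sqrt (Finset.sum_le_sum fun i _ => hcoord i)
      _ = Real.sqrt ((n : ℝ) * (Δ / w) ^ 2) := by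
          rw [Finset.sum_const, Finset.card_univ, Fintype.card_fin, nsmul_eq_mul]
      _ = Real.sqrt n * (Δ / w) := by
          rw [Real.sqrt_mul (Nat.cast_nonneg n), Real.sqrt_sq hΔw]
  calc ‖u - x‖ = ‖(u - v) + (v - x)‖ := by rw [sub_add_sub_cancel]
    _ ≤ ‖u - v‖ + ‖v - x‖ := norm_add_le _ _
    _ ≤ Real.sqrt n * (Δ / w) + γ / 2 := add_le_add h2 h1
    _ < γ := by
        have : Real.sqrt n * (Δ / w) = Real.sqrt n * Δ / w := by ring
        rw [this]
        linarith

set_option maxHeartbeats 2000000 in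
/-- Pointwise convergence of the multivariate sampling Kantorovich operators at points of
continuity of a bounded measurable function: `lim_{w→+∞} (S_w^χ f)(x) = f(x)`. -/
theorem sk_pointwise_convergence_at_continuity_point {n : ℕ}
    (t : ℤ → ℝ) (δ Δ : ℝ) (ht : IsNodeSeq t δ Δ)
    (χ : EuclideanSpace ℝ (Fin n) → ℝ) (hχ : IsKernel t χ)
    (f : EuclideanSpace ℝ (Fin n) → ℝ) (hf_meas : Measurable f)
    (hf_bdd : ∃ M : ℝ, ∀ x : EuclideanSpace ℝ (Fin n), |f x| ≤ M)
    (x : EuclideanSpace ℝ (Fin n)) (hf_cont : ContinuousAt f x) :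
    Tendsto (fun w : ℝ => SK t χ w f x) atTop (nhds (f x)) := by
  classical
  obtain ⟨M', hM'⟩ := hf_bdd
  have hM'0 : 0 ≤ M' := le_trans (abs_nonneg _) (hM' x)
  obtain ⟨ε₁, hε₁, M₁, hM₁⟩ := hχ.bounded_near_zero
  have hM₁0 : 0 ≤ M₁ := le_trans (abs_nonneg _) (hM₁ 0 (by simpa using hε₁))
  obtain ⟨β, hβ, hsum, Mβ, hMβ⟩ := hχ.moment
  have hMβ0 : 0 ≤ Mβ :=
    le_trans (tsum_nonneg fun k => mul_nonneg (abs_nonneg _)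
      (Real.rpow_nonneg (norm_nonneg _) _)) (hMβ x)
  set m0 : ℝ := (((2 * ⌈2 * ε₁ / δ⌉₊ + 1) ^ n : ℕ) : ℝ) * M₁ + Mβ / ε₁ ^ β with hm0
  have hm0nonneg : 0 ≤ m0 :=
    add_nonneg (mul_nonneg (Nat.cast_nonneg _) hM₁0)
      (div_nonneg hMβ0 (Real.rpow_pos_of_pos hε₁ β).le)
  have huni := fun u => chi_abs_summable_bound ht hε₁ hM₁0 hM₁ hβ hsum hMβ u
  rw [Metric.tendsto_nhds]
  intro ε hε
  set ε' : ℝ := ε / (2 * (m0 + 1)) with hε'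
  have hε'pos : 0 < ε' := by positivity
  obtain ⟨γ, hγpos, hγ⟩ : ∃ γ > 0, ∀ u : EuclideanSpace ℝ (Fin n),
      ‖u - x‖ < γ → |f u - f x| ≤ ε' := by
    rcases Metric.continuousAt_iff.mp hf_cont ε' hε'pos with ⟨γ, hγpos, h⟩
    refine ⟨γ, hγpos, fun u hu => ?_⟩
    have h2 : dist u x < γ := by rwa [dist_eq_norm]
    have := h h2
    rw [Real.dist_eq] at this
    exact this.le
  -- the eventual bound
  have hbound : ∀ᶠ w in atTop, dist (SK t χ w f x) (f x) ≤
      ε' * m0 + 2 * M' * Mβ * ((w * (γ / 2)) ^ β)⁻¹ := by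
    filter_upwards [eventually_ge_atTop (max 1 (4 * (Real.sqrt n * Δ) / γ))] with w hw
    have hw1 : (1:ℝ) ≤ w := le_trans (le_max_left _ _) hw
    have hw0 : (0:ℝ) < w := lt_of_lt_of_le zero_lt_one hw1
    have hWn : Real.sqrt n * Δ / w ≤ γ / 4 := by
      have h4 : 4 * (Real.sqrt n * Δ) / γ ≤ w := le_trans (le_max_right _ _) hw
      rw [div_le_iff₀ hγpos] at h4
      rw [div_le_iff₀ hw0]
      nlinarith [Real.sqrt_nonneg (n:ℝ), ht.Delta_pos.le]
    obtain ⟨hgs, hgtsum⟩ := huni (w • x)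
    have hP : (0:ℝ) < (w * (γ / 2)) ^ β := Real.rpow_pos_of_pos (by positivity) β
    -- per-k bounds
    have havg_le : ∀ k : Fin n → ℤ,
        |(w ^ n / ∏ i, (t (k i + 1) - t (k i))) * ∫ u in cell t w k, f u| ≤ M' :=
      fun k => avg_abs_le ht hw0 k hM'
    have hfar : ∀ k : Fin n → ℤ,
        |(w ^ n / ∏ i, (t (k i + 1) - t (k i))) * (∫ u in cell t w k, f u) - f x| ≤ 2 * M' := by
      intro k
      calc |(w ^ n / ∏ i, (t (k i + 1) - t (k i))) * (∫ u in cell t w k, f u) - f x|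
          ≤ |(w ^ n / ∏ i, (t (k i + 1) - t (k i))) * ∫ u in cell t w k, f u| + |f x| :=
            abs_sub _ _
        _ ≤ 2 * M' := by linarith [havg_le k, hM' x]
    have hnear : ∀ k : Fin n → ℤ, ‖w • x - nodes t k‖ ≤ w * (γ / 2) →
        |(w ^ n / ∏ i, (t (k i + 1) - t (k i))) * (∫ u in cell t w k, f u) - f x| ≤ ε' := by
      intro k hk
      exact avg_sub_le ht hw0 k hf_meas hM' hε'pos.le
        (fun u hu => hγ u (cell_close ht hw0 k hγpos hWn hk u hu))
    -- termwise bound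
    have hterm : ∀ k : Fin n → ℤ,
        |χ (w • x - nodes t k) *
          ((w ^ n / ∏ i, (t (k i + 1) - t (k i))) * (∫ u in cell t w k, f u) - f x)| ≤
        ε' * |χ (w • x - nodes t k)| +
          (2 * M' / (w * (γ / 2)) ^ β) *
            (|χ (w • x - nodes t k)| * ‖w • x - nodes t k‖ ^ β) := by
      intro k
      set a := |χ (w • x - nodes t k)| with ha
      have ha0 : 0 ≤ a := abs_nonneg _
      rw [abs_mul, ← ha]
      by_cases hk : ‖w • x - nodes t k‖ ≤ w * (γ / 2)
      · have h1 := hnear k hk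
        have h2 : 0 ≤ (2 * M' / (w * (γ / 2)) ^ β) *
            (a * ‖w • x - nodes t k‖ ^ β) := by positivity
        nlinarith [mul_le_mul_of_nonneg_left h1 ha0]
      · push_neg at hk
        have hQ : (w * (γ / 2)) ^ β ≤ ‖w • x - nodes t k‖ ^ β :=
          Real.rpow_le_rpow (by positivity) hk.le hβ.le
        have h1 := hfar k
        have h2 : a * |(w ^ n / ∏ i, (t (k i + 1) - t (k i))) *
            (∫ u in cell t w k, f u) - f x| ≤ a * (2 * M') :=
          mul_le_mul_of_nonneg_left h1 ha0
        have h3 : a * (2 * M') ≤ (2 * M' / (w * (γ / 2)) ^ β) *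
            (a * ‖w • x - nodes t k‖ ^ β) := by
          rw [div_mul_eq_mul_div, le_div_iff₀ hP]
          nlinarith [mul_le_mul_of_nonneg_left hQ (mul_nonneg ha0 (mul_nonneg (by norm_num : (0:ℝ) ≤ 2) hM'0))]
        have h4 : 0 ≤ ε' * a := by positivity
        linarith
    -- summability
    have hsm := hsum (w • x)
    have hbsum : Summable (fun k : Fin n → ℤ => ε' * |χ (w • x - nodes t k)| +
        (2 * M' / (w * (γ / 2)) ^ β) *
          (|χ (w • x - nodes t k)| * ‖w • x - nodes t k‖ ^ β)) :=
      (hgs.mul_left ε').add (hsm.mul_left _)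
    have hprod_sum : Summable (fun k : Fin n → ℤ => χ (w • x - nodes t k) *
        ((w ^ n / ∏ i, (t (k i + 1) - t (k i))) * (∫ u in cell t w k, f u) - f x)) := by
      refine Summable.of_norm_bounded (hgs.mul_left (2 * M')) fun k => ?_
      rw [Real.norm_eq_abs, abs_mul]
      calc |χ (w • x - nodes t k)| * |(w ^ n / ∏ i, (t (k i + 1) - t (k i))) *
            (∫ u in cell t w k, f u) - f x| ≤ |χ (w • x - nodes t k)| * (2 * M') :=
            mul_le_mul_of_nonneg_left (hfar k) (abs_nonneg _)
        _ = 2 * M' * |χ (w • x - nodes t k)| := by ring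
    have havgsum : Summable (fun k : Fin n → ℤ => χ (w • x - nodes t k) *
        ((w ^ n / ∏ i, (t (k i + 1) - t (k i))) * ∫ u in cell t w k, f u)) := by
      refine Summable.of_norm_bounded (hgs.mul_left M') fun k => ?_
      rw [Real.norm_eq_abs, abs_mul]
      calc |χ (w • x - nodes t k)| * |(w ^ n / ∏ i, (t (k i + 1) - t (k i))) *
            ∫ u in cell t w k, f u| ≤ |χ (w • x - nodes t k)| * M' :=
            mul_le_mul_of_nonneg_left (havg_le k) (abs_nonneg _)
        _ = M' * |χ (w • x - nodes t k)| := by ring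
    have hconstsum : Summable (fun k : Fin n → ℤ => χ (w • x - nodes t k) * f x) :=
      hgs.of_abs.mul_right (f x)
    -- the key identity
    have hSK : SK t χ w f x - f x = ∑' k : Fin n → ℤ, χ (w • x - nodes t k) *
        ((w ^ n / ∏ i, (t (k i + 1) - t (k i))) * (∫ u in cell t w k, f u) - f x) := by
      have h2 : f x = ∑' k : Fin n → ℤ, χ (w • x - nodes t k) * f x := by
        rw [tsum_mul_right, hχ.partition_of_unity (w • x), one_mul]
      have h1 : SK t χ w f x = ∑' k : Fin n → ℤ, χ (w • x - nodes t k) *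
          ((w ^ n / ∏ i, (t (k i + 1) - t (k i))) * ∫ u in cell t w k, f u) := rfl
      conv_lhs => rw [h1, h2]
      rw [← Summable.tsum_sub havgsum hconstsum]
      congr 1
      funext k
      ring
    rw [Real.dist_eq, hSK]
    calc |∑' k : Fin n → ℤ, χ (w • x - nodes t k) *
          ((w ^ n / ∏ i, (t (k i + 1) - t (k i))) * (∫ u in cell t w k, f u) - f x)|
        ≤ ∑' k : Fin n → ℤ, |χ (w • x - nodes t k) *
          ((w ^ n / ∏ i, (t (k i + 1) - t (k i))) * (∫ u in cell t w k, f u) - f x)| := by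
          have habs : Summable fun k : Fin n → ℤ => ‖χ (w • x - nodes t k) *
              ((w ^ n / ∏ i, (t (k i + 1) - t (k i))) * (∫ u in cell t w k, f u) - f x)‖ := by
            simpa only [Real.norm_eq_abs] using hprod_sum.abs
          simpa only [Real.norm_eq_abs] using norm_tsum_le_tsum_norm habs
      _ ≤ ∑' k : Fin n → ℤ, (ε' * |χ (w • x - nodes t k)| +
          (2 * M' / (w * (γ / 2)) ^ β) *
            (|χ (w • x - nodes t k)| * ‖w • x - nodes t k‖ ^ β)) :=
          Summable.tsum_le_tsum hterm hprod_sum.abs hbsum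
      _ = ε' * (∑' k : Fin n → ℤ, |χ (w • x - nodes t k)|) +
          (2 * M' / (w * (γ / 2)) ^ β) *
            ∑' k : Fin n → ℤ, |χ (w • x - nodes t k)| * ‖w • x - nodes t k‖ ^ β := by
          rw [Summable.tsum_add (hgs.mul_left ε') (hsm.mul_left _), tsum_mul_left, tsum_mul_left]
      _ ≤ ε' * m0 + (2 * M' / (w * (γ / 2)) ^ β) * Mβ := by
          refine add_le_add (mul_le_mul_of_nonneg_left hgtsum hε'pos.le) ?_
          exact mul_le_mul_of_nonneg_left (hMβ (w • x)) (by positivity)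
      _ = ε' * m0 + 2 * M' * Mβ * ((w * (γ / 2)) ^ β)⁻¹ := by ring
  -- limit of the bound
  have hinv : Tendsto (fun w : ℝ => ((w * (γ / 2)) ^ β)⁻¹) atTop (nhds 0) := by
    have h1 : Tendsto (fun w : ℝ => w * (γ / 2)) atTop atTop :=
      Tendsto.atTop_mul_const (by positivity) tendsto_id
    have h2 : Tendsto (fun w : ℝ => (w * (γ / 2)) ^ β) atTop atTop :=
      (tendsto_rpow_atTop hβ).comp h1
    exact h2.inv_tendsto_atTop
  have hlim : Tendsto (fun w : ℝ => ε' * m0 + 2 * M' * Mβ * ((w * (γ / 2)) ^ β)⁻¹) atTop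
      (nhds (ε' * m0 + 2 * M' * Mβ * 0)) :=
    tendsto_const_nhds.add (tendsto_const_nhds.mul hinv)
  rw [mul_zero, add_zero] at hlim
  have hlt : ε' * m0 < ε := by
    have h1 : ε' * m0 ≤ ε' * (m0 + 1) := mul_le_mul_of_nonneg_left (by linarith) hε'pos.le
    have h2 : ε' * (m0 + 1) = ε / 2 := by
      rw [hε']; field_simp
    calc ε' * m0 ≤ ε' * (m0 + 1) := h1
      _ = ε / 2 := h2
      _ < ε := by linarith
  filter_upwards [hbound, hlim.eventually_lt_const hlt] with w h1 h2
  exact lt_of_le_of_lt h1 h2
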